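/- arXiv:2105.14132 — 4 statements merged into one kernel-verified Lean document; each statement's English description precedes it below -/
import Mathlib

section
/- In the Hardy possibilistic model, the local event (a,b) = (1,0) cannot be extended to a global assignment. Precisely: there is no function f : Fin 5 → Bool with f(0)=1, f(1)=0 such that (f(0),f(1)) ∈ S_ab, (f(1),f(2)) ∈ S_bc, (f(2),f(3)) ∈ S_cd, (f(3),f(4)) ∈ S_de, and (f(4),f(0)) ∈ S_ea, where S_ab = {(0,0),(0,1),(1,0)}, S_bc = {(0,1),(1,0)}, S_cd = {(0,0),(0,1),(1,0)}, S_de = {(0,1),(1,0)}, S_ea = {(0,0),(0,1),(1,0)}. -/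
/-- Supports of the Hardy model contexts, with `false = 0`, `true = 1`. -/
def Sab : Set (Bool × Bool) := {(false, false), (false, true), (true, false)}
def Sbc : Set (Bool × Bool) := {(false, true), (true, false)}
def Scd : Set (Bool × Bool) := {(false, false), (false, true), (true, false)}
def Sde : Set (Bool × Bool) := {(false, true), (true, false)}
def Sea : Set (Bool × Bool) := {(false, false), (false, true), (true, false)}

theorem stmt_4 :
    ¬ ∃ f : Fin 5 → Bool,
      f 0 = true ∧ f 1 = false ∧
      (f 0, f 1) ∈ Sab ∧ (f 1, f 2) ∈ Sbc ∧ (f 2, f 3) ∈ Scd ∧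
      (f 3, f 4) ∈ Sde ∧ (f 4, f 0) ∈ Sea := by
  rintro ⟨f, h0, h1, _, hbc, hcd, hde, hea⟩
  simp only [Sab, Sbc, Scd, Sde, Sea, Set.mem_insert_iff, Set.mem_singleton_iff,
    Prod.mk.injEq, h0, h1] at hbc hcd hde hea
  rcases hbc with ⟨_,h2⟩|⟨h2,_⟩ <;> rcases hde with ⟨h3,h4⟩|⟨h3,h4⟩ <;>
    simp_all
end

section
/- Let X be a finite set of measurements, O a finite outcome set, and 𝒞 a family of contexts (subsets of X). Suppose the empirical model is factorizable over a finite hidden-variable space Λ: there are weights p : Λ → [0,1] with ∑_λ p(λ) = 1 and for each measurement m ∈ X and λ ∈ Λ a distribution d_{m,λ} on O, such that for every context U ∈ 𝒞 the context distribution is μ_U(s) = ∑_λ p(λ) ∏_{m ∈ U} d_{m,λ}(s(m)) for s : U → O. Then the model is non-disturbing: for any U, V ∈ 𝒞 with U ∩ V ≠ ∅, the marginal of μ_U on U ∩ V equals the marginal of μ_V on U ∩ V. -/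
open scoped Classical

lemma marg_aux {ι κ O : Type*} [Fintype ι] [Fintype κ] [Fintype O] [DecidableEq ι]
    (e : κ → ι) (he : Function.Injective e)
    (f : ι → O → ℝ) (hf : ∀ i, ∑ o, f i o = 1) (t : κ → O) :
    (∑ s : ι → O, if (∀ k, s (e k) = t k) then ∏ i, f i (s i) else 0)
      = ∏ k, f (e k) (t k) := by
  set g : ι → O → ℝ := fun i o => if (∀ k, e k = i → o = t k) then f i o else 0 with hg
  have key : ∀ s : ι → O,
      (if (∀ k, s (e k) = t k) then ∏ i, f i (s i) else 0) = ∏ i, g i (s i) := by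
    intro s
    by_cases h : ∀ k, s (e k) = t k
    · rw [if_pos h]
      refine Finset.prod_congr rfl fun i _ => ?_
      have hc : ∀ k, e k = i → s i = t k := fun k hk => hk ▸ h k
      simp only [hg]
      rw [if_pos hc]
    · rw [if_neg h]
      push_neg at h
      obtain ⟨k, hk⟩ := h
      refine (Finset.prod_eq_zero (Finset.mem_univ (e k)) ?_).symm
      have hc : ¬ (∀ k', e k' = e k → s (e k) = t k') := fun hall => hk (hall k rfl)
      simp only [hg]
      rw [if_neg hc]
  rw [Finset.sum_congr rfl fun s _ => key s, ← Fintype.prod_sum g]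
  have hout : ∀ i, i ∉ Finset.univ.image e → (∑ o, g i o) = 1 := by
    intro i hi
    have hne : ∀ k, e k ≠ i := fun k hk =>
      hi (hk ▸ Finset.mem_image_of_mem e (Finset.mem_univ k))
    have hgf : ∀ o : O, g i o = f i o := by
      intro o
      simp only [hg]
      exact if_pos (fun k hk => absurd hk (hne k))
    simp [hgf, hf]
  rw [← Finset.prod_subset (Finset.subset_univ (Finset.univ.image e))
        (fun i _ hi => hout i hi)]
  rw [Finset.prod_image (fun a _ b _ h => he h)]
  refine Finset.prod_congr rfl fun k _ => ?_
  have hsum : ∀ o : O, g (e k) o = if o = t k then f (e k) o else 0 := by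
    intro o
    by_cases ho : o = t k
    · have hc : ∀ k', e k' = e k → o = t k' := fun k' hk' => (he hk') ▸ ho
      simp only [hg]
      rw [if_pos hc, if_pos ho]
    · have hc : ¬ (∀ k', e k' = e k → o = t k') := fun hall => ho (hall k rfl)
      simp only [hg]
      rw [if_neg hc, if_neg ho]
  simp [hsum]

theorem stmt_7 {X O Λ : Type*} [Fintype X] [Fintype O] [Fintype Λ]
    (C : Set (Set X))
    (p : Λ → ℝ) (hp0 : ∀ l, 0 ≤ p l) (hp1 : ∑ l, p l = 1)
    (d : X → Λ → O → ℝ) (hd0 : ∀ m l o, 0 ≤ d m l o) (hd1 : ∀ m l, ∑ o, d m l o = 1)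
    (μ : (U : Set X) → (U → O) → ℝ)
    (hμ : ∀ U ∈ C, ∀ s : U → O, μ U s = ∑ l, p l * ∏ m : U, d m.val l (s m)) :
    ∀ U ∈ C, ∀ V ∈ C, (U ∩ V).Nonempty →
      ∀ t : ↥(U ∩ V) → O,
        (∑ s : ↥U → O,
            if (∀ x : ↥(U ∩ V), s ⟨x.val, x.property.1⟩ = t x) then μ U s else 0) =
        (∑ s : ↥V → O,
            if (∀ x : ↥(U ∩ V), s ⟨x.val, x.property.2⟩ = t x) then μ V s else 0) := by
  intro U hU V hV _ t
  have main : ∀ (W : Set X) (hW : W ∈ C) (e : ↥(U ∩ V) → ↥W)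
      (he : Function.Injective e),
      (∑ s : ↥W → O, if (∀ x : ↥(U ∩ V), s (e x) = t x) then μ W s else 0)
        = ∑ l, p l * ∏ x : ↥(U ∩ V), d (e x).val l (t x) := by
    intro W hW e he
    have h1 : ∀ s : ↥W → O,
        (if (∀ x : ↥(U ∩ V), s (e x) = t x) then μ W s else 0)
        = ∑ l, p l * (if (∀ x : ↥(U ∩ V), s (e x) = t x)
            then ∏ m : ↥W, d m.val l (s m) else 0) := by
      intro s
      by_cases h : ∀ x : ↥(U ∩ V), s (e x) = t x
      · simp only [if_pos h, hμ W hW s]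
      · simp only [if_neg h, mul_zero, Finset.sum_const_zero]
    rw [Finset.sum_congr rfl fun s _ => h1 s, Finset.sum_comm]
    refine Finset.sum_congr rfl fun l _ => ?_
    rw [← Finset.mul_sum]
    congr 1
    exact marg_aux e he (fun m o => d m.val l o) (fun m => hd1 m.val l) t
  have hinjU : Function.Injective (fun x : ↥(U ∩ V) => (⟨x.val, x.property.1⟩ : ↥U)) := by
    intro a b h
    simp only [Subtype.mk.injEq] at h
    exact Subtype.ext h
  have hinjV : Function.Injective (fun x : ↥(U ∩ V) => (⟨x.val, x.property.2⟩ : ↥V)) := by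
    intro a b h
    simp only [Subtype.mk.injEq] at h
    exact Subtype.ext h
  rw [main U hU _ hinjU, main V hV _ hinjV]
end

section
/- Finite Fine–Abramsky–Brandenburger theorem (model ⇒ marginals): with the hypotheses of the factorizable finite hidden-variable model, define the global distribution μ_X on functions X → O by μ_X(g) = ∑_λ p(λ) ∏_{m ∈ X} d_{m,λ}(g(m)). Then μ_X is a probability distribution and for every context U ∈ 𝒞, the marginal of μ_X on U equals μ_U. -/
open scoped Classical

lemma aux_sum_prod {X O : Type*} [Fintype X] [Fintype O] (f : X → O → ℝ) :
    (∑ g : X → O, ∏ m, f m (g m)) = ∏ m, ∑ o, f m o := by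
  rw [Finset.prod_univ_sum]
  refine Finset.sum_congr ?_ fun g _ => rfl
  ext g; simp [Fintype.mem_piFinset]

lemma aux_key {X O : Type*} [Fintype X] [Fintype O] (U : Set X) (f : X → O → ℝ)
    (s : U → O) :
    (∑ g : X → O, if (∀ x : U, g x.val = s x) then ∏ m, f m (g m) else 0)
    = (∏ m : U, f m.val (s m)) * ∏ m : {x : X // ¬ x ∈ U}, ∑ o, f m.val o := by
  classical
  let e := Equiv.piEquivPiSubtypeProd (fun x => x ∈ U) (fun _ => O)
  rw [← e.symm.sum_comp]
  rw [Fintype.sum_prod_type]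
  have hcond : ∀ (a : (x : {x // x ∈ U}) → O) (b : (x : {x // ¬ x ∈ U}) → O),
      (∀ x : U, (e.symm (a, b)) x.val = s x) ↔ a = s := by
    intro a b
    constructor
    · intro h; funext x
      have := h x
      simpa [e, Equiv.piEquivPiSubtypeProd_symm_apply, x.2] using this
    · intro h x; subst h
      simp [e, Equiv.piEquivPiSubtypeProd_symm_apply, x.2]
  have hprod : ∀ (b : (x : {x // ¬ x ∈ U}) → O),
      (∏ m, f m ((e.symm (s, b)) m))
      = (∏ m : U, f m.val (s m)) * ∏ m : {x : X // ¬ x ∈ U}, f m.val (b m) := by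
    intro b
    rw [← Fintype.prod_subtype_mul_prod_subtype (fun x => x ∈ U)
      (fun m => f m ((e.symm (s, b)) m))]
    congr 1
    · exact Finset.prod_congr rfl fun x _ => by
        simp [e, Equiv.piEquivPiSubtypeProd_symm_apply, x.2]
    · exact Finset.prod_congr rfl fun x _ => by
        simp [e, Equiv.piEquivPiSubtypeProd_symm_apply, x.2]
  calc (∑ a, ∑ b, if (∀ x : U, (e.symm (a, b)) x.val = s x) then
          ∏ m, f m ((e.symm (a, b)) m) else 0)
      = ∑ a, ∑ b, if a = s then ∏ m, f m ((e.symm (a, b)) m) else 0 := by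
        refine Finset.sum_congr rfl fun a _ => Finset.sum_congr rfl fun b _ => ?_
        exact if_congr (hcond a b) rfl rfl
    _ = ∑ b, ∏ m, f m ((e.symm (s, b)) m) := by
        rw [Finset.sum_comm]
        simp
    _ = ∑ b, (∏ m : U, f m.val (s m)) * ∏ m : {x : X // ¬ x ∈ U}, f m.val (b m) :=
        Finset.sum_congr rfl fun b _ => hprod b
    _ = (∏ m : U, f m.val (s m)) * ∑ b : (x : {x // ¬ x ∈ U}) → O,
          ∏ m : {x : X // ¬ x ∈ U}, f m.val (b m) := by
        rw [Finset.mul_sum]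
    _ = (∏ m : U, f m.val (s m)) * ∏ m : {x : X // ¬ x ∈ U}, ∑ o, f m.val o := by
        congr 1
        convert aux_sum_prod (fun m : {x : X // ¬ x ∈ U} => f m.val) using 2
        apply Finset.coe_injective
        simp

theorem stmt_8 {X O Λ : Type*} [Fintype X] [Fintype O] [Fintype Λ]
    (C : Set (Set X))
    (p : Λ → ℝ) (hp0 : ∀ l, 0 ≤ p l) (hp1 : ∑ l, p l = 1)
    (d : X → Λ → O → ℝ) (hd0 : ∀ m l o, 0 ≤ d m l o) (hd1 : ∀ m l, ∑ o, d m l o = 1)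
    (μ : (U : Set X) → (U → O) → ℝ)
    (hμ : ∀ U ∈ C, ∀ s : U → O, μ U s = ∑ l, p l * ∏ m : U, d m.val l (s m))
    (μX : (X → O) → ℝ)
    (hμX : ∀ g : X → O, μX g = ∑ l, p l * ∏ m, d m l (g m)) :
    (∀ g, 0 ≤ μX g) ∧ (∑ g : X → O, μX g = 1) ∧
    ∀ U ∈ C, ∀ s : U → O,
      (∑ g : X → O, if (∀ x : U, g x.val = s x) then μX g else 0) = μ U s := by
  refine ⟨?_, ?_, ?_⟩
  · intro g
    rw [hμX]
    exact Finset.sum_nonneg fun l _ => mul_nonneg (hp0 l)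
      (Finset.prod_nonneg fun m _ => hd0 m l (g m))
  · calc ∑ g : X → O, μX g = ∑ g : X → O, ∑ l, p l * ∏ m, d m l (g m) := by
          exact Finset.sum_congr rfl fun g _ => hμX g
      _ = ∑ l, ∑ g : X → O, p l * ∏ m, d m l (g m) := Finset.sum_comm
      _ = ∑ l, p l * ∑ g : X → O, ∏ m, d m l (g m) := by
          simp [Finset.mul_sum]
      _ = ∑ l, p l * ∏ m, ∑ o, d m l o := by
          refine Finset.sum_congr rfl fun l _ => ?_
          rw [aux_sum_prod (fun m => d m l)]
      _ = 1 := by simp [hd1, hp1]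
  · intro U hU s
    rw [hμ U hU s]
    calc (∑ g : X → O, if (∀ x : U, g x.val = s x) then μX g else 0)
        = ∑ g : X → O, ∑ l, (if (∀ x : U, g x.val = s x) then
            p l * ∏ m, d m l (g m) else 0) := by
          refine Finset.sum_congr rfl fun g _ => ?_
          split <;> simp [hμX]
      _ = ∑ l, ∑ g : X → O, (if (∀ x : U, g x.val = s x) then
            p l * ∏ m, d m l (g m) else 0) := Finset.sum_comm
      _ = ∑ l, p l * ∑ g : X → O, (if (∀ x : U, g x.val = s x) then
            ∏ m, d m l (g m) else 0) := by
          refine Finset.sum_congr rfl fun l _ => ?_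
          rw [Finset.mul_sum]
          refine Finset.sum_congr rfl fun g _ => ?_
          split <;> simp
      _ = ∑ l, p l * ∏ m : U, d m.val l (s m) := by
          refine Finset.sum_congr rfl fun l _ => ?_
          rw [aux_key U (fun m => d m l) s]
          simp [hd1]
end

section
/- Strong contextuality of the PR box implies vanishing non-contextual fraction: let p be the PR box table on the 5-cycle with contexts ab, bc, cd, de, ea, where p assigns probability 1/2 to each of (0,0) and (1,1) on the first four contexts and probability 1/2 to each of (0,1) and (1,0) on ea. If q is any probability distribution on functions {a,b,c,d,e} → {0,1} and λ ∈ [0,1] satisfies λ · (marginal of q on each context) ≤ p entrywise, then λ = 0. -/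
open scoped Classical

/-- PR box table on the 5-cycle: edge `k` joins measurements `k` and `k+1`. -/
noncomputable def prBox (k : Fin 5) (i j : Bool) : ℝ :=
  if k = 4 then (if i ≠ j then 1/2 else 0) else (if i = j then 1/2 else 0)

lemma witness_zero (g : Fin 5 → Bool) :
    ∃ k : Fin 5, (if k = 4 then g k = g (k + 1) else g k ≠ g (k + 1)) := by
  revert g; decide

theorem stmt_15 (q : (Fin 5 → Bool) → ℝ) (hq0 : ∀ g, 0 ≤ q g)
    (hq1 : ∑ g : Fin 5 → Bool, q g = 1)
    (l : ℝ) (hl0 : 0 ≤ l) (hl1 : l ≤ 1)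
    (h : ∀ k : Fin 5, ∀ i j : Bool,
      l * (∑ g : Fin 5 → Bool, if g k = i ∧ g (k + 1) = j then q g else 0) ≤ prBox k i j) :
    l = 0 := by
  by_contra hl
  have hlpos : 0 < l := lt_of_le_of_ne hl0 (Ne.symm hl)
  have hqz : ∀ g : Fin 5 → Bool, q g = 0 := by
    intro g
    obtain ⟨k, hk⟩ := witness_zero g
    have hp : prBox k (g k) (g (k + 1)) = 0 := by
      unfold prBox
      by_cases h4 : k = 4 <;> simp [h4] at hk ⊢ <;> simp [hk]
    have hS := h k (g k) (g (k + 1))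
    rw [hp] at hS
    have hS0 : (0:ℝ) ≤ ∑ g' : Fin 5 → Bool,
        if g' k = g k ∧ g' (k + 1) = g (k + 1) then q g' else 0 :=
      Finset.sum_nonneg fun g' _ => by split; exacts [hq0 g', le_refl 0]
    have hSeq : (∑ g' : Fin 5 → Bool,
        if g' k = g k ∧ g' (k + 1) = g (k + 1) then q g' else 0) = 0 := by
      nlinarith
    have := (Finset.sum_eq_zero_iff_of_nonneg
      (fun g' _ => by split; exacts [hq0 g', le_refl 0])).mp hSeq g (Finset.mem_univ g)
    simpa using this
  simp [hqz] at hq1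
end
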